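/- Let R be a reduced noetherian local ring (no nilpotent elements), A ⊆ B a pure-essential extension with B torsion-free. Then the divisible part D(B) is contained in A. -/

import Mathlib

open IsLocalRing Pointwise

universe u v

variable (R : Type u) [CommRing R]

/-- A submodule `A ⊆ B` is pure if for every module `X`, `X ⊗ A → X ⊗ B` is injective. -/
def IsPureSubmodule {B : Type v} [AddCommGroup B] [Module R B] (A : Submodule R B) : Prop :=
  ∀ (X : Type v) [AddCommGroup X] [Module R X],
    Function.Injective (LinearMap.lTensor X A.subtype)

/-- A linear map is a pure monomorphism if it is injective with pure range. -/
def IsPureMono {M N : Type v} [AddCommGroup M] [Module R M]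
    [AddCommGroup N] [Module R N] (f : M →ₗ[R] N) : Prop :=
  Function.Injective f ∧ IsPureSubmodule R (LinearMap.range f)

/-- A submodule `A ⊆ B` is pure-essential if it is pure and for every `X ⊆ B` with
`X ⊓ A = ⊥` and `(X ⊕ A)/X` pure in `B/X`, one has `X = ⊥`. -/
def IsPureEssential {B : Type v} [AddCommGroup B] [Module R B] (A : Submodule R B) : Prop :=
  IsPureSubmodule R A ∧
    ∀ X : Submodule R B, X ⊓ A = ⊥ → IsPureSubmodule R (A.map X.mkQ) → X = ⊥

/-- An injective linear map is a pure-essential embedding if its range is pure-essential. -/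
def IsPureEssentialEmb {M N : Type v} [AddCommGroup M] [Module R M]
    [AddCommGroup N] [Module R N] (f : M →ₗ[R] N) : Prop :=
  Function.Injective f ∧ IsPureEssential R (LinearMap.range f)

/-- `A ⊆ B` is strictly pure-essential if `A` is pure in `B` and every homomorphism out of `B`
restricting to a pure monomorphism on `A` is itself a pure monomorphism. -/
def IsStrictlyPureEssential {B : Type v} [AddCommGroup B] [Module R B]
    (A : Submodule R B) : Prop :=
  IsPureSubmodule R A ∧
    ∀ (Y : Type v) [AddCommGroup Y] [Module R Y] (f : B →ₗ[R] Y),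
      IsPureMono R (f ∘ₗ A.subtype) → IsPureMono R f

/-- `B` is an injective hull of `A` (via some embedding with essential range). -/
def IsInjectiveHull (A : Type v) (B : Type v) [AddCommGroup A] [Module R A]
    [AddCommGroup B] [Module R B] : Prop :=
  Module.Injective R B ∧ ∃ f : A →ₗ[R] B, Function.Injective f ∧
    ∀ X : Submodule R B, X ≠ ⊥ → X ⊓ LinearMap.range f ≠ ⊥

/-- The Matlis evaluation map `M → Hom(Hom(M,E),E)`. -/
noncomputable def matlisEval (E M : Type v) [AddCommGroup E] [Module R E]
    [AddCommGroup M] [Module R M] : M →ₗ[R] ((M →ₗ[R] E) →ₗ[R] E) :=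
  LinearMap.applyₗ

/-- `M` is Matlis-reflexive (w.r.t. `E`). -/
def IsMatlisReflexive (E M : Type v) [AddCommGroup E] [Module R E]
    [AddCommGroup M] [Module R M] : Prop :=
  Function.Bijective (matlisEval R E M)

/-- `M` is quasi-reflexive: the canonical map `M → M°°` is a pure-essential embedding. -/
def IsQuasiReflexive (E M : Type v) [AddCommGroup E] [Module R E]
    [AddCommGroup M] [Module R M] : Prop :=
  IsPureEssentialEmb R (matlisEval R E M)

/-- The largest radical-full submodule `P(M)` (sum of all `V` with `V = m V`). -/
def radicalFullPart [IsLocalRing R] (M : Type v) [AddCommGroup M] [Module R M] :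
    Submodule R M :=
  sSup {V : Submodule R M | V = maximalIdeal R • V}

/-- The largest divisible submodule `D(M)` (w.r.t. non-zerodivisors). -/
def divisiblePart (M : Type v) [AddCommGroup M] [Module R M] : Submodule R M :=
  sSup {V : Submodule R M | ∀ r ∈ nonZeroDivisors R, V ≤ r • V}

/-!
`D = D(B)` is torsion-free and divisible, and purity of `A` makes `D ⊓ A` divisible too. Over a
reduced noetherian ring such modules are injective: by Baer's criterion, since every ideal `I`
contains an element acting on `I` like a non-zerodivisor (`I + ann I` contains a non-zerodivisor).
Hence `D ⊓ A` splits off `D` with a complement `X`, which is again divisible, hence injective,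
and meets `A` trivially. Injectivity of `X` gives a retraction of `B` onto `X` killing `A`, so the
image of `A` in `B ⧸ X` is still pure, and pure-essentiality forces `X = 0`, i.e. `D ≤ A`.
-/

open scoped nonZeroDivisors

section

variable {R}

theorem Ideal.exists_mem_sup_annihilator_mem_nonZeroDivisors [IsNoetherianRing R] [IsReduced R]
    (I : Ideal R) : ∃ c ∈ I ⊔ I.annihilator, c ∈ R⁰ := by
  by_contra! h
  obtain ⟨x, hx, hx0⟩ := SetLike.exists_of_lt
    (Ideal.bot_lt_annihilator_of_disjoint_nonZeroDivisors (Set.disjoint_left.2 h))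
  have hxI : x ∈ I.annihilator := Submodule.annihilator_mono le_sup_left hx
  -- `x` annihilates `I`, so it lies in `I ⊔ ann I` and therefore annihilates itself
  have hxx : x * x = 0 := Submodule.mem_annihilator.1 hx x (Ideal.mem_sup_right hxI)
  exact hx0 (IsReduced.eq_zero x ⟨2, by rw [sq, hxx]⟩)

theorem Ideal.exists_mem_forall_mul_eq_nonZeroDivisor_mul [IsNoetherianRing R] [IsReduced R]
    (I : Ideal R) : ∃ y ∈ I, ∃ s ∈ R⁰, ∀ a ∈ I, y * a = s * a := by
  obtain ⟨s, hs, hsR⟩ := I.exists_mem_sup_annihilator_mem_nonZeroDivisors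
  obtain ⟨y, hy, z, hz, rfl⟩ := Submodule.mem_sup.1 hs
  refine ⟨y, hy, y + z, hsR, fun a ha ↦ ?_⟩
  rw [add_mul, ← smul_eq_mul z, Submodule.mem_annihilator.1 hz a ha, add_zero]

theorem Module.injective_of_isTorsionFree_of_divisible [IsNoetherianRing R] [IsReduced R]
    {M : Type*} [AddCommGroup M] [Module R M] [Module.IsTorsionFree R M]
    (hdiv : ∀ r ∈ R⁰, ∀ x : M, ∃ y, r • y = x) : Module.Injective R M := by
  refine Module.Baer.injective fun I f ↦ ?_
  obtain ⟨y, hy, s, hs, hys⟩ := I.exists_mem_forall_mul_eq_nonZeroDivisor_mul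
  obtain ⟨m, hm⟩ := hdiv s hs (f ⟨y, hy⟩)
  -- `y` acts on `I` as the regular element `s`, so `s • f a = a • f y = s • (a • m)`
  refine ⟨LinearMap.toSpanSingleton R M m, fun a ha ↦ ?_⟩
  refine (isRegular_iff_mem_nonZeroDivisors.2 hs).isSMulRegular ?_
  have hya : a • (⟨y, hy⟩ : I) = s • ⟨a, ha⟩ := Subtype.ext (by
    simp only [SetLike.mk_smul_mk, smul_eq_mul]; rw [mul_comm, hys a ha])
  simp only [LinearMap.toSpanSingleton_apply]
  rw [smul_comm, hm, ← map_smul, hya, map_smul]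

open TensorProduct in
theorem IsPureSubmodule.exists_smul_eq {B : Type u} [AddCommGroup B] [Module R B]
    {A : Submodule R B} (hA : IsPureSubmodule R A) {r : R} {b : B} (hb : r • b ∈ A) :
    ∃ a ∈ A, r • a = r • b := by
  set I : Ideal R := Ideal.span {r}
  have hr : r • (1 : R ⧸ I) = 0 := by
    rw [Algebra.smul_def, mul_one, Ideal.Quotient.algebraMap_eq,
      Ideal.Quotient.eq_zero_iff_mem]
    exact Ideal.mem_span_singleton_self r
  have htmul : (1 : R ⧸ I) ⊗ₜ[R] (⟨r • b, hb⟩ : A) = 0 := hA (R ⧸ I) <| by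
    rw [map_zero, LinearMap.lTensor_tmul, Submodule.subtype_apply, ← smul_tmul, hr, zero_tmul]
  have hmem := congrArg (quotTensorEquivQuotSMul A I) htmul
  rw [quotTensorEquivQuotSMul_mk_one_tmul, map_zero, Submodule.Quotient.mk_eq_zero,
    Submodule.ideal_span_singleton_smul, Submodule.mem_smul_pointwise_iff_exists] at hmem
  obtain ⟨a, -, ha⟩ := hmem
  exact ⟨a, a.2, congrArg Subtype.val ha⟩

theorem IsPureSubmodule.inf_le_smul_inf {B : Type u} [AddCommGroup B] [Module R B]
    [Module.IsTorsionFree R B] {A D : Submodule R B} (hA : IsPureSubmodule R A) {r : R}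
    (hr : r ∈ R⁰) (hD : D ≤ r • D) : D ⊓ A ≤ r • (D ⊓ A) := by
  rintro _ ⟨hxD, hxA⟩
  obtain ⟨y, hy, rfl⟩ := (Submodule.mem_smul_pointwise_iff_exists _ _ _).1 (hD hxD)
  obtain ⟨a, ha, hay⟩ := hA.exists_smul_eq hxA
  obtain rfl : a = y := (isRegular_iff_mem_nonZeroDivisors.2 hr).isSMulRegular hay
  exact Submodule.smul_mem_pointwise_smul _ _ _ ⟨hy, ha⟩

instance Submodule.isTorsionFree {M : Type*} [AddCommGroup M] [Module R M]
    [Module.IsTorsionFree R M] (N : Submodule R M) : Module.IsTorsionFree R N :=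
  N.injective_subtype.moduleIsTorsionFree _ fun _ _ ↦ rfl

theorem divisiblePart_le_smul {M : Type*} [AddCommGroup M] [Module R M] {r : R} (hr : r ∈ R⁰) :
    divisiblePart R M ≤ r • divisiblePart R M :=
  sSup_le fun _ hV ↦ (hV r hr).trans (smul_le_smul_left r (le_sSup hV))

theorem Submodule.injective_of_le_smul [IsNoetherianRing R] [IsReduced R] {B : Type*}
    [AddCommGroup B] [Module R B] [Module.IsTorsionFree R B] {N : Submodule R B}
    (hN : ∀ r ∈ R⁰, N ≤ r • N) : Module.Injective R N :=
  Module.injective_of_isTorsionFree_of_divisible fun r hr x ↦ by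
    obtain ⟨y, hy, hyx⟩ := (mem_smul_pointwise_iff_exists _ _ _).1 (hN r hr x.2)
    exact ⟨⟨y, hy⟩, Subtype.ext hyx⟩

theorem Submodule.le_smul_of_disjoint {M : Type*} [AddCommGroup M] [Module R M]
    {X Y : Submodule R M} (hXY : Disjoint X Y) {r : R} (h : X ≤ r • (X ⊔ Y)) : X ≤ r • X := by
  intro x hx
  obtain ⟨z, hz, rfl⟩ := (mem_smul_pointwise_iff_exists _ _ _).1 (h hx)
  obtain ⟨x', hx', y', hy', rfl⟩ := mem_sup.1 hz
  have hy0 : r • y' = 0 := disjoint_def.1 hXY _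
    (by simpa [smul_add] using X.sub_mem hx (X.smul_mem r hx')) (Y.smul_mem r hy')
  rw [smul_add, hy0, add_zero]
  exact smul_mem_pointwise_smul _ _ _ hx'

theorem IsPureSubmodule.map_of_leftInvOn {B C : Type v} [AddCommGroup B] [Module R B]
    [AddCommGroup C] [Module R C] {A : Submodule R B} (hA : IsPureSubmodule R A)
    {f : B →ₗ[R] C} {s : C →ₗ[R] B} (hs : Set.LeftInvOn s f A) :
    IsPureSubmodule R (A.map f) := by
  intro M _ _ t t' htt'
  have hcomp : s ∘ₗ (A.map f).subtype ∘ₗ f.submoduleMap A = A.subtype :=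
    LinearMap.ext fun a ↦ hs a.2
  obtain ⟨u, rfl⟩ := LinearMap.lTensor_surjective M (f.submoduleMap_surjective A) t
  obtain ⟨u', rfl⟩ := LinearMap.lTensor_surjective M (f.submoduleMap_surjective A) t'
  refine congrArg _ (hA M ?_)
  rw [← hcomp, LinearMap.lTensor_comp, LinearMap.lTensor_comp]
  simp only [LinearMap.comp_apply]
  rw [htt']

theorem Submodule.exists_le_disjoint_sup_inf_eq {B : Type v} [AddCommGroup B] [Module R B]
    (D A : Submodule R B) [Module.Injective R ↥(D ⊓ A)] :
    ∃ X ≤ D, Disjoint X A ∧ X ⊔ D ⊓ A = D := by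
  obtain ⟨ρ, hρ⟩ := Module.Injective.out (D ⊓ A).subtype (D ⊓ A).injective_subtype LinearMap.id
  have hcompl := LinearMap.isCompl_of_proj hρ
  refine ⟨D ⊓ LinearMap.ker ρ, inf_le_left, ?_, ?_⟩
  · rw [disjoint_iff, eq_bot_iff, ← hcompl.inf_eq_bot]
    exact le_inf (le_inf (inf_le_left.trans inf_le_left) inf_le_right)
      (inf_le_left.trans inf_le_right)
  · rw [inf_sup_assoc_of_le _ inf_le_left, hcompl.symm.sup_eq_top, inf_top_eq]

theorem Submodule.exists_leftInvOn_mkQ_of_disjoint {B : Type v} [AddCommGroup B] [Module R B]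
    {X A : Submodule R B} [Module.Injective R X] (hXA : Disjoint X A) :
    ∃ s : B ⧸ X →ₗ[R] B, Set.LeftInvOn s X.mkQ A := by
  have hinj : Function.Injective (X.subtype.coprod A.subtype) := by
    rw [← LinearMap.ker_eq_bot, LinearMap.ker_coprod_of_disjoint_range _ _ (by simpa using hXA),
      ker_subtype, ker_subtype, prod_bot]
  -- a retraction onto `X` vanishing on `A` identifies `B ⧸ X` with its kernel, which contains `A`
  obtain ⟨π, hπ⟩ := Module.Injective.out _ hinj (LinearMap.fst R X A)
  have hcompl := LinearMap.isCompl_of_proj (f := π) fun x ↦ by simpa using hπ (x, 0)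
  have hπA : A ≤ LinearMap.ker π := fun a ha ↦ by simpa using hπ (0, ⟨a, ha⟩)
  exact ⟨(LinearMap.ker π).subtype ∘ₗ (quotientEquivOfIsCompl _ _ hcompl).toLinearMap,
    fun a ha ↦ congrArg Subtype.val (quotientEquivOfIsCompl_apply_mk_right hcompl ⟨a, hπA ha⟩)⟩

end

theorem stmt_9 [IsNoetherianRing R] [IsReduced R]
    {B : Type u} [AddCommGroup B] [Module R B] (A : Submodule R B)
    (hA : IsPureEssential R A)
    (htf : ∀ r ∈ nonZeroDivisors R, ∀ x : B, r • x = 0 → x = 0) :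
    divisiblePart R B ≤ A := by
  obtain ⟨hpure, hess⟩ := hA
  have : Module.IsTorsionFree R B := ⟨fun r hr x y hxy ↦ sub_eq_zero.1 <|
    htf r (isRegular_iff_mem_nonZeroDivisors.1 hr) _ (by rw [smul_sub, sub_eq_zero]; exact hxy)⟩
  set D := divisiblePart R B
  have hD : ∀ r ∈ R⁰, D ≤ r • D := fun r hr ↦ divisiblePart_le_smul hr
  have : Module.Injective R ↥(D ⊓ A) :=
    Submodule.injective_of_le_smul fun r hr ↦ hpure.inf_le_smul_inf hr (hD r hr)
  obtain ⟨X, hXD, hXA, hsup⟩ := Submodule.exists_le_disjoint_sup_inf_eq D A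
  have : Module.Injective R X := Submodule.injective_of_le_smul fun r hr ↦
    Submodule.le_smul_of_disjoint (hXA.mono_right inf_le_right) (hsup ▸ hXD.trans (hD r hr))
  obtain ⟨s, hs⟩ := Submodule.exists_leftInvOn_mkQ_of_disjoint hXA
  have hX : X = ⊥ := hess X (disjoint_iff.1 hXA) (hpure.map_of_leftInvOn hs)
  rw [← hsup, hX, bot_sup_eq]
  exact inf_le_right
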